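/- arXiv:2104.03863 — 2 statements merged into one kernel-verified Lean document; each statement's English description precedes it below -/
import Mathlib

section
/- Suppose f : ℝ^d → ℝ is continuous and C¹, |f(x)| ≤ |η|/10, ‖∇f(x)‖ ≥ c > 0, sign(η) = −sign(f(x)) with f(x) ≠ 0, and ‖∇f(x) − ∇f(x+δ)‖ ≤ c/10 for all δ with ‖δ‖ ≤ |η|/‖∇f(x)‖. Then sign(f(x)) ≠ sign(f(x + (η/‖∇f(x)‖²)·∇f(x))). -/
/-!
A first-order Taylor estimate along the step `s = (η / ‖∇f x‖²) • ∇f x`, which has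
`⟪∇f x, s⟫ = η` and `‖s‖ = |η| / ‖∇f x‖`, shows `f (x + s) = f x + η + e` with
`|e| ≤ (c / 10) ‖s‖ ≤ |η| / 10`. Since also `|f x| ≤ |η| / 10`, the value `f (x + s)` lies
within `|η| / 5` of `η`, so it has the sign of `η`, which is opposite to that of `f x`.
-/

open InnerProductSpace Metric

namespace Real

theorem sign_add_of_abs_lt {η t : ℝ} (h : |t| < |η|) : sign (η + t) = sign η := by
  obtain ⟨ht₁, ht₂⟩ := abs_lt.mp h
  rcases lt_trichotomy η 0 with hη | rfl | hη
  · rw [abs_of_neg hη] at ht₁ ht₂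
    rw [sign_of_neg hη, sign_of_neg (by linarith)]
  · exact absurd (abs_zero (α := ℝ) ▸ h) (abs_nonneg t).not_gt
  · rw [abs_of_pos hη] at ht₁ ht₂
    rw [sign_of_pos hη, sign_of_pos (by linarith)]

theorem sign_ne_neg_sign {a : ℝ} (ha : a ≠ 0) : sign a ≠ -sign a := by
  rcases sign_apply_eq_of_ne_zero a ha with h | h <;> rw [h] <;> norm_num

end Real

section Gradient

variable {E : Type*} [NormedAddCommGroup E] [InnerProductSpace ℝ E]

theorem real_inner_div_norm_sq_smul_self (g : E) (η : ℝ) (hg : g ≠ 0) :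
    ⟪g, (η / ‖g‖ ^ 2) • g⟫_ℝ = η := by
  rw [real_inner_smul_right, real_inner_self_eq_norm_sq]
  field_simp [norm_ne_zero_iff.mpr hg]

theorem norm_div_norm_sq_smul_self (g : E) (η : ℝ) (hg : g ≠ 0) :
    ‖(η / ‖g‖ ^ 2) • g‖ = |η| / ‖g‖ := by
  rw [norm_smul, Real.norm_eq_abs, abs_div, abs_pow, abs_norm]
  field_simp [norm_ne_zero_iff.mpr hg]

variable [CompleteSpace E]

theorem norm_fderiv_sub_fderiv_eq (f : E → ℝ) (x y : E) :
    ‖fderiv ℝ f y - fderiv ℝ f x‖ = ‖gradient f y - gradient f x‖ := by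
  rw [← toDual_gradient, ← toDual_gradient, ← map_sub, LinearIsometryEquiv.norm_map]

theorem abs_sub_sub_inner_gradient_le {f : E → ℝ} {x h : E} {r ε : ℝ}
    (hf : ∀ y ∈ closedBall x r, DifferentiableAt ℝ f y) (hh : ‖h‖ ≤ r)
    (hε : ∀ y ∈ closedBall x r, ‖gradient f y - gradient f x‖ ≤ ε) :
    |f (x + h) - f x - ⟪gradient f x, h⟫_ℝ| ≤ ε * ‖h‖ := by
  have hr : 0 ≤ r := (norm_nonneg h).trans hh
  have := (convex_closedBall x r).norm_image_sub_le_of_norm_hasFDerivWithin_le'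
    (fun y hy => (hf y hy).hasFDerivAt.hasFDerivWithinAt)
    (fun y hy => (norm_fderiv_sub_fderiv_eq f x y).trans_le (hε y hy))
    (mem_closedBall_self hr)
    (by simpa [dist_eq_norm] using hh : x + h ∈ closedBall x r)
  rwa [add_sub_cancel_left, ← toDual_gradient, toDual_apply_apply] at this

end Gradient

/-- A single gradient step flips the sign of `f` under quantitative bounds on the value,
the gradient norm, and the local gradient variation. -/
theorem stmt_2 {d : ℕ} (f : EuclideanSpace ℝ (Fin d) → ℝ)
    (hf : ContDiff ℝ 1 f) (x : EuclideanSpace ℝ (Fin d)) (η c : ℝ) (hc : 0 < c)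
    (hfx : f x ≠ 0)
    (hval : |f x| ≤ |η| / 10)
    (hgrad : c ≤ ‖gradient f x‖)
    (hsign : Real.sign η = -Real.sign (f x))
    (hdev : ∀ δ : EuclideanSpace ℝ (Fin d), ‖δ‖ ≤ |η| / ‖gradient f x‖ →
      ‖gradient f x - gradient f (x + δ)‖ ≤ c / 10) :
    Real.sign (f x) ≠ Real.sign (f (x + (η / ‖gradient f x‖ ^ 2) • gradient f x)) := by
  set g := gradient f x
  set s := (η / ‖g‖ ^ 2) • g
  have hG : 0 < ‖g‖ := hc.trans_le hgrad
  have hη : η ≠ 0 := by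
    rintro rfl
    exact hfx (abs_nonpos_iff.mp (by simpa using hval))
  have hs := norm_div_norm_sq_smul_self g η (norm_pos_iff.mp hG)
  have htaylor : |f (x + s) - f x - η| ≤ c / 10 * ‖s‖ := by
    rw [← real_inner_div_norm_sq_smul_self g η (norm_pos_iff.mp hG)]
    refine abs_sub_sub_inner_gradient_le (fun y _ => (hf.differentiable one_ne_zero) y)
      le_rfl fun y hy => ?_
    rw [norm_sub_rev, ← add_sub_cancel x y]
    exact hdev _ (by rw [← hs, ← dist_eq_norm]; exact hy)
  have herr : c / 10 * ‖s‖ ≤ |η| / 10 := by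
    calc c / 10 * ‖s‖ = c / ‖g‖ * (|η| / 10) := by rw [hs]; ring
      _ ≤ 1 * (|η| / 10) := by gcongr; exact (div_le_one hG).mpr hgrad
      _ = |η| / 10 := one_mul _
  have hclose : |f x + (f (x + s) - f x - η)| < |η| := by
    linarith [abs_add_le (f x) (f (x + s) - f x - η), abs_pos.mpr hη]
  have hstep : f (x + s) = η + (f x + (f (x + s) - f x - η)) := by ring
  rw [hstep, Real.sign_add_of_abs_lt hclose, hsign]
  exact Real.sign_ne_neg_sign hfx
end

section
/- Let w ~ N(0,(1/d)I_d), x ∈ ℝ^d with ‖x‖=√d, and δ ∈ ℝ^d with ‖δ‖ ≤ R. Then P(sign(w·x) ≠ sign(w·(x+δ))) ≤ R√(2 log(d)/d) + 1/d. -/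
/-!
The event `sign ⟪w, x⟫ ≠ sign ⟪w, x + δ⟫` forces `|⟪w, x⟫| ≤ |⟪w, δ⟫|`, so for every threshold
`t ≥ 0` it lies in `{|⟪w, x⟫| ≤ t} ∪ {t ≤ |⟪w, δ⟫|}`. Since `w` has independent centred Gaussian
coordinates of variance `1/d`, `⟪w, y⟫ ~ N(0, ‖y‖² / d)`; thus `⟪w, x⟫` is standard normal, whose
density is at most `1 / √(2π) ≤ 1/2`, and `⟪w, δ⟫` has variance `‖δ‖² / d ≤ R² / d`, so its
two-sided tail at `t` is at most `exp (-t² d / (2R²))`. The choice `t = R √(2 log d / d)` makes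
this `1/d`.
-/

open MeasureTheory ProbabilityTheory Real Set
open scoped RealInnerProductSpace ENNReal NNReal

namespace Real

theorem abs_le_abs_of_sign_ne_sign_add {a b : ℝ} (h : sign a ≠ sign (a + b)) : |a| ≤ |b| := by
  contrapose! h
  rcases lt_trichotomy a 0 with ha | rfl | ha
  · rw [abs_of_neg ha] at h
    rw [sign_of_neg ha, sign_of_neg (by linarith [le_abs_self b])]
  · exact absurd h (by simp)
  · rw [abs_of_pos ha] at h
    rw [sign_of_pos ha, sign_of_pos (by linarith [neg_abs_le b])]

theorem exp_neg_sq_div_le_inv {d s R : ℝ} (hd : 1 ≤ d) (hs : 0 < s) (hsR : s ≤ R) :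
    exp (-(R * √(2 * log d / d)) ^ 2 / (2 * (s ^ 2 / d))) ≤ 1 / d := by
  have hlog : 0 ≤ log d := log_nonneg hd
  have hexponent : -(R * √(2 * log d / d)) ^ 2 / (2 * (s ^ 2 / d)) = -(R ^ 2 / s ^ 2 * log d) := by
    rw [mul_pow, sq_sqrt (by positivity)]
    field_simp
  have hratio : 1 ≤ R ^ 2 / s ^ 2 := (one_le_div (by positivity)).mpr (by gcongr)
  calc exp (-(R * √(2 * log d / d)) ^ 2 / (2 * (s ^ 2 / d)))
      ≤ exp (-log d) := by rw [hexponent]; gcongr; nlinarith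
    _ = 1 / d := by rw [exp_neg, exp_log (by linarith), one_div]

end Real

theorem MeasureTheory.measure_sign_ne_sign_add_le {Ω : Type*} [MeasurableSpace Ω] (μ : Measure Ω)
    (X Y : Ω → ℝ) (t : ℝ) :
    μ {ω | sign (X ω) ≠ sign (X ω + Y ω)} ≤ μ {ω | |X ω| ≤ t} + μ {ω | t ≤ |Y ω|} := by
  refine (measure_mono fun ω hω ↦ ?_).trans (measure_union_le _ _)
  rcases le_total |Y ω| t with hY | hY
  · exact Or.inl ((abs_le_abs_of_sign_ne_sign_add hω).trans hY)
  · exact Or.inr hY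

namespace ProbabilityTheory

lemma gaussianPDFReal_le_inv_sqrt (m : ℝ) (v : ℝ≥0) (x : ℝ) :
    gaussianPDFReal m v x ≤ (√(2 * π * v))⁻¹ := by
  rw [gaussianPDFReal_def]
  refine mul_le_of_le_one_right (by positivity) (exp_le_one_iff.mpr ?_)
  exact div_nonpos_of_nonpos_of_nonneg (neg_nonpos.mpr (sq_nonneg _)) (by positivity)

lemma gaussianReal_le_mul_volume (m : ℝ) {v : ℝ≥0} (hv : v ≠ 0) (s : Set ℝ) :
    gaussianReal m v s ≤ ENNReal.ofReal (√(2 * π * v))⁻¹ * volume s := by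
  rw [gaussianReal_apply _ hv, ← setLIntegral_const]
  exact lintegral_mono fun x ↦ ENNReal.ofReal_le_ofReal (gaussianPDFReal_le_inv_sqrt m v x)

lemma gaussianReal_setOf_abs_le_le {t : ℝ} (ht : 0 ≤ t) :
    gaussianReal 0 1 {z | |z| ≤ t} ≤ ENNReal.ofReal t := by
  have hsqrt : 2 ≤ √(2 * π * (1 : ℝ≥0)) := by
    rw [NNReal.coe_one, mul_one, Real.le_sqrt zero_le_two (by positivity)]
    linarith [pi_gt_three]
  have hIcc : {z : ℝ | |z| ≤ t} = Icc (-t) t := by ext; simp [abs_le]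
  calc gaussianReal 0 1 {z | |z| ≤ t}
      ≤ ENNReal.ofReal (√(2 * π * (1 : ℝ≥0)))⁻¹ * volume (Icc (-t) t) :=
        hIcc ▸ gaussianReal_le_mul_volume 0 one_ne_zero _
    _ = ENNReal.ofReal ((√(2 * π * (1 : ℝ≥0)))⁻¹ * (2 * t)) := by
        rw [Real.volume_Icc, ← ENNReal.ofReal_mul (by positivity)]
        ring_nf
    _ ≤ ENNReal.ofReal t := by
        refine ENNReal.ofReal_le_ofReal ?_
        calc (√(2 * π * (1 : ℝ≥0)))⁻¹ * (2 * t) ≤ 2⁻¹ * (2 * t) := by gcongr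
          _ = t := by ring

lemma gaussianReal_preimage_neg {v : ℝ≥0} {s : Set ℝ} (hs : MeasurableSet s) :
    gaussianReal 0 v (Neg.neg ⁻¹' s) = gaussianReal 0 v s := by
  conv_rhs => rw [← neg_zero, ← gaussianReal_map_neg, Measure.map_apply measurable_neg hs]

lemma gaussianReal_Ici_zero {v : ℝ≥0} (hv : v ≠ 0) : gaussianReal 0 v (Ici 0) = 2⁻¹ := by
  have := nullSingletonClass_gaussianReal (μ := 0) hv
  have hsymm : gaussianReal 0 v (Iic 0) = gaussianReal 0 v (Ici 0) := by
    rw [← gaussianReal_preimage_neg measurableSet_Ici]; simp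
  have htotal := measure_union_add_inter (μ := gaussianReal 0 v) (Iic (0 : ℝ))
    (measurableSet_Ici (a := 0))
  rw [Iic_union_Ici, Iic_inter_Ici, Icc_self, measure_univ, measure_singleton, add_zero,
    hsymm, ← two_mul] at htotal
  exact ENNReal.eq_inv_of_mul_eq_one_left (by rw [mul_comm, htotal])

lemma gaussianPDFReal_le_exp_mul_sub {v : ℝ≥0} {t z : ℝ} (ht : 0 ≤ t) (hz : t ≤ z) :
    gaussianPDFReal 0 v z ≤ exp (-t ^ 2 / (2 * v)) * gaussianPDFReal 0 v (z - t) := by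
  simp only [gaussianPDFReal_def, sub_zero]
  rw [mul_left_comm, ← exp_add, ← add_div]
  gcongr
  nlinarith

/-- The density on `[t, ∞)` is compared with its translate by `t`; the Chernoff bound would lose
a factor `2` in the two-sided tail below. -/
lemma gaussianReal_Ici_le {v : ℝ≥0} (hv : v ≠ 0) {t : ℝ} (ht : 0 ≤ t) :
    gaussianReal 0 v (Ici t) ≤ ENNReal.ofReal (exp (-t ^ 2 / (2 * v))) / 2 := by
  calc gaussianReal 0 v (Ici t)
      ≤ ∫⁻ z in Ici t, ENNReal.ofReal (exp (-t ^ 2 / (2 * v))) * gaussianPDF 0 v (z - t) := by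
        rw [gaussianReal_apply _ hv]
        refine setLIntegral_mono (by fun_prop) fun z hz ↦ ?_
        rw [gaussianPDF, gaussianPDF, ← ENNReal.ofReal_mul (exp_nonneg _)]
        exact ENNReal.ofReal_le_ofReal (gaussianPDFReal_le_exp_mul_sub ht hz)
    _ = ENNReal.ofReal (exp (-t ^ 2 / (2 * v))) * gaussianReal 0 v (Ici 0) := by
        rw [lintegral_const_mul _ (by fun_prop), gaussianReal_apply _ hv]
        congr 1
        simpa using (measurePreserving_sub_right volume t).setLIntegral_comp_preimage
          (measurableSet_Ici (a := 0)) (measurable_gaussianPDF 0 v)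
    _ = ENNReal.ofReal (exp (-t ^ 2 / (2 * v))) / 2 := by
        rw [gaussianReal_Ici_zero hv, ENNReal.div_eq_inv_mul, mul_comm]

lemma gaussianReal_setOf_le_abs_le {v : ℝ≥0} (hv : v ≠ 0) {t : ℝ} (ht : 0 ≤ t) :
    gaussianReal 0 v {z | t ≤ |z|} ≤ ENNReal.ofReal (exp (-t ^ 2 / (2 * v))) := by
  have hsplit : {z : ℝ | t ≤ |z|} = Neg.neg ⁻¹' Ici t ∪ Ici t := by
    ext z; simp [le_abs', or_comm]
  calc gaussianReal 0 v {z | t ≤ |z|}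
      ≤ gaussianReal 0 v (Neg.neg ⁻¹' Ici t) + gaussianReal 0 v (Ici t) :=
        hsplit ▸ measure_union_le _ _
    _ ≤ ENNReal.ofReal (exp (-t ^ 2 / (2 * v))) := by
        rw [gaussianReal_preimage_neg measurableSet_Ici]
        exact (add_le_add (gaussianReal_Ici_le hv ht) (gaussianReal_Ici_le hv ht)).trans_eq
          (ENNReal.add_halves _)

variable {Ω : Type*} [MeasurableSpace Ω] {μ : Measure Ω} [IsProbabilityMeasure μ]

lemma iIndepFun.map_finsetSum_eq_gaussianReal {ι : Type*} {X : ι → Ω → ℝ}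
    (hX : iIndepFun X μ) (hmeas : ∀ i, Measurable (X i)) {m : ι → ℝ} {v : ι → ℝ≥0}
    (hlaw : ∀ i, μ.map (X i) = gaussianReal (m i) (v i)) (s : Finset ι) :
    μ.map (∑ i ∈ s, X i) = gaussianReal (∑ i ∈ s, m i) (∑ i ∈ s, v i) := by
  classical
  induction s using Finset.induction_on with
  | empty =>
    change μ.map (fun _ ↦ (0 : ℝ)) = _
    simp [Measure.map_const]
  | insert a s ha ih =>
    simp only [Finset.sum_insert ha]
    rw [add_comm (X a), add_comm (m a), add_comm (v a)]
    exact gaussianReal_add_gaussianReal_of_indepFun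
      (hX.indepFun_finsetSum_of_notMem hmeas ha) ih (hlaw a)

lemma map_inner_eq_gaussianReal {ι : Type*} [Fintype ι] {w : Ω → EuclideanSpace ℝ ι}
    (hw : Measurable w) (hind : iIndepFun (fun i ω ↦ w ω i) μ) {v : ℝ≥0}
    (hlaw : ∀ i, μ.map (fun ω ↦ w ω i) = gaussianReal 0 v) (y : EuclideanSpace ℝ ι) :
    μ.map (fun ω ↦ ⟪w ω, y⟫) = gaussianReal 0 (‖y‖₊ ^ 2 * v) := by
  have hcoord (i : ι) : Measurable fun ω ↦ w ω i := by fun_prop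
  have hinner : (fun ω ↦ ⟪w ω, y⟫) = ∑ i, fun ω ↦ y i * w ω i := by
    ext ω; simp [PiLp.inner_apply]
  have hind' : iIndepFun (fun i ω ↦ y i * w ω i) μ :=
    hind.comp (fun i ↦ (y i * ·)) fun i ↦ measurable_const_mul _
  have hlaw' (i : ι) : μ.map (fun ω ↦ y i * w ω i) = gaussianReal 0 (‖y i‖₊ ^ 2 * v) := by
    change μ.map ((y i * ·) ∘ fun ω ↦ w ω i) = _
    rw [← Measure.map_map (measurable_const_mul (y i)) (hcoord i), hlaw,
      gaussianReal_map_const_mul, mul_zero]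
    congr 2; ext; simp
  rw [hinner, hind'.map_finsetSum_eq_gaussianReal (fun i ↦ (hcoord i).const_mul _) hlaw',
    Finset.sum_const_zero, ← Finset.sum_mul, EuclideanSpace.nnnorm_eq, NNReal.sq_sqrt]

end ProbabilityTheory

/-- Probability of a sign flip of the preactivation under a perturbation of size at most `R`. -/
theorem stmt_12 {Ω : Type*} [MeasurableSpace Ω] (μ : Measure Ω) [IsProbabilityMeasure μ]
    (d : ℕ) (hd : 0 < d)
    (w : Ω → EuclideanSpace ℝ (Fin d)) (hwmeas : Measurable w)
    (hwcoord : iIndepFun (fun i ω => w ω i) μ)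
    (hwlaw : ∀ i, Measure.map (fun ω => w ω i) μ = gaussianReal 0 ((d : ℝ≥0))⁻¹)
    (x : EuclideanSpace ℝ (Fin d)) (hx : ‖x‖ = Real.sqrt d)
    (R : ℝ) (δ : EuclideanSpace ℝ (Fin d)) (hδ : ‖δ‖ ≤ R) :
    μ {ω | Real.sign ⟪w ω, x⟫ ≠ Real.sign ⟪w ω, x + δ⟫} ≤
      ENNReal.ofReal (R * Real.sqrt (2 * Real.log d / d) + 1 / d) := by
  rcases eq_or_ne δ 0 with rfl | hδ0
  · simp
  have hd' : (1 : ℝ) ≤ d := by exact_mod_cast hd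
  set t := R * √(2 * log d / d)
  have ht : 0 ≤ t := mul_nonneg ((norm_nonneg δ).trans hδ) (sqrt_nonneg _)
  have hlaw := map_inner_eq_gaussianReal hwmeas hwcoord hwlaw
  have hvar_x : ‖x‖₊ ^ 2 * (d : ℝ≥0)⁻¹ = 1 := by
    ext; push_cast; rw [hx, sq_sqrt (by positivity), mul_inv_cancel₀ (by positivity)]
  have hvar_δ : (↑(‖δ‖₊ ^ 2 * (d : ℝ≥0)⁻¹) : ℝ) = ‖δ‖ ^ 2 / d := by push_cast; rfl
  have hinner_meas (y : EuclideanSpace ℝ (Fin d)) : AEMeasurable (fun ω ↦ ⟪w ω, y⟫) μ :=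
    (hwmeas.inner measurable_const).aemeasurable
  have hsmall : μ {ω | |⟪w ω, x⟫| ≤ t} ≤ ENNReal.ofReal t := by
    refine (Measure.le_map_apply (hinner_meas x) {z | |z| ≤ t}).trans ?_
    rw [hlaw, hvar_x]
    exact gaussianReal_setOf_abs_le_le ht
  have hlarge : μ {ω | t ≤ |⟪w ω, δ⟫|} ≤ ENNReal.ofReal (1 / d) := by
    refine (Measure.le_map_apply (hinner_meas δ) {z | t ≤ |z|}).trans ?_
    rw [hlaw]
    refine (gaussianReal_setOf_le_abs_le (by simp [hδ0, hd.ne']) ht).trans (ENNReal.ofReal_le_ofReal ?_)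
    rw [hvar_δ]
    exact exp_neg_sq_div_le_inv hd' (norm_pos_iff.mpr hδ0) hδ
  calc μ {ω | sign ⟪w ω, x⟫ ≠ sign ⟪w ω, x + δ⟫}
      ≤ μ {ω | |⟪w ω, x⟫| ≤ t} + μ {ω | t ≤ |⟪w ω, δ⟫|} := by
        simpa only [inner_add_right] using measure_sign_ne_sign_add_le μ _ _ t
    _ ≤ ENNReal.ofReal (t + 1 / d) := by
        rw [ENNReal.ofReal_add ht (by positivity)]
        gcongr
end
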